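/- Let μ and ν be nonzero finite Borel measures on ℝ with compact support and let q < 0. For κ > 0 define the enlarged-box partition sum T_q^κ(ρ, ε) = Σ_{i ∈ ℤ, ρ(B(iε, ε/2)) > 0} ρ(B(iε, (1/2 + κ)ε))^q. Suppose the limits D_q(μ ∗ ν) = lim_{ε→0⁺} (1/(q−1)) · log T_q^1(μ ∗ ν, ε) / log ε, D_q(μ) = lim_{ε→0⁺} (1/(q−1)) · log T_q^{1/2}(μ, ε) / log ε, and D_q(ν) = lim_{ε→0⁺} (1/(q−1)) · log T_q^{1/2}(ν, ε) / log ε all exist. Then D_q(μ ∗ ν) ≤ D_q(μ) + D_q(ν). (Theorem 1, case q < 0, in the improved multifractal formalism with enlarged boxes.) -/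

import Mathlib

open MeasureTheory Topology Filter

/-- Convolution of two Borel measures on ℝ: pushforward of the product measure
under the addition map. -/
noncomputable def mconv (μ ν : Measure ℝ) : Measure ℝ :=
  (μ.prod ν).map (fun p : ℝ × ℝ => p.1 + p.2)

/-- Topological support of a Borel measure on ℝ: the (closed) set of points all of
whose neighbourhoods have positive measure. -/
def msupp (μ : Measure ℝ) : Set ℝ := {x : ℝ | ∀ ε > 0, 0 < μ (Metric.ball x ε)}

lemma DqAux.measure_msupp_compl (μ : Measure ℝ) : μ (msupp μ)ᶜ = 0 := by
  have hsub : (msupp μ)ᶜ ⊆ ⋃ (p : ℚ × ℚ) (_ : μ (Metric.ball (p.1 : ℝ) (p.2 : ℝ)) = 0),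
      Metric.ball (p.1 : ℝ) (p.2 : ℝ) := by
    intro x hx
    simp only [msupp, Set.mem_setOf_eq, not_forall, Set.mem_compl_iff] at hx
    obtain ⟨r, hr, h0⟩ := hx
    have h0 : μ (Metric.ball x r) = 0 := by
      simpa using h0
    obtain ⟨a, ha⟩ := exists_rat_near x (by positivity : (0:ℝ) < r/4)
    obtain ⟨s, hs1, hs2⟩ := exists_rat_btwn (by linarith : (r/4 : ℝ) < r/2)
    refine Set.mem_iUnion.2 ⟨(a, s), Set.mem_iUnion.2 ⟨?_, ?_⟩⟩
    · refine measure_mono_null (fun y hy => ?_) h0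
      have : |y - (a:ℝ)| < (s:ℝ) := by simpa [Real.dist_eq] using hy
      have : |y - x| < r := by
        have := abs_sub_abs_le_abs_sub y x
        have h3 : |y - x| ≤ |y - (a:ℝ)| + |(a:ℝ) - x| := by
          simpa using abs_sub_le y (a:ℝ) x
        have h4 : |(a:ℝ) - x| < r/4 := by simpa [abs_sub_comm] using ha
        linarith
      simpa [Metric.mem_ball, Real.dist_eq] using this
    · have h4 : |x - (a:ℝ)| < r/4 := ha
      have : |x - (a:ℝ)| < (s:ℝ) := lt_trans h4 hs1
      simpa [Metric.mem_ball, Real.dist_eq] using this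
  refine measure_mono_null hsub ?_
  refine measure_iUnion_null fun p => ?_
  by_cases h : μ (Metric.ball (p.1 : ℝ) (p.2 : ℝ)) = 0 <;> simp [h]

lemma DqAux.countable_atoms (μ : Measure ℝ) [IsFiniteMeasure μ] :
    {x : ℝ | μ {x} ≠ 0}.Countable := by
  have := MeasureTheory.Measure.countable_meas_pos_of_disjoint_iUnion (μ := μ)
    (As := fun x : ℝ => {x}) (fun x => measurableSet_singleton x)
    (by intro i j hij; simp [Function.onFun, Set.disjoint_singleton, hij])
  refine this.mono fun x hx => ?_
  simpa [pos_iff_ne_zero] using hx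

lemma DqAux.exists_pos_of_cover {ι α : Type*} [Countable ι] [MeasurableSpace α]
    (ρ : Measure α) (t : ι → Set α) (hcov : ∀ x, ∃ i, x ∈ t i) {A : Set α}
    (hA : ρ A ≠ 0) : ∃ i, ρ (A ∩ t i) ≠ 0 := by
  by_contra h
  push_neg at h
  apply hA
  have hsub : A ⊆ ⋃ i, A ∩ t i := by
    intro x hx
    obtain ⟨i, hi⟩ := hcov x
    exact Set.mem_iUnion.2 ⟨i, hx, hi⟩
  exact measure_mono_null hsub (measure_iUnion_null h)

lemma DqAux.cover (δ : ℝ) (hδ : 0 < δ) (x : ℝ) :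
    ∃ j : ℤ, x ∈ Set.Ico (((j:ℝ) - 1/2) * δ) (((j:ℝ) + 1/2) * δ) := by
  refine ⟨⌊x/δ + 1/2⌋, ?_, ?_⟩
  · have h := Int.floor_le (x/δ + 1/2)
    rw [← sub_le_iff_le_add] at h
    calc ((⌊x/δ + 1/2⌋ : ℝ) - 1/2) * δ ≤ (x/δ) * δ := by nlinarith
    _ = x := by field_simp
  · have h := Int.lt_floor_add_one (x/δ + 1/2)
    have h2 : x/δ < (⌊x/δ + 1/2⌋ : ℝ) + 1/2 := by linarith
    calc x = (x/δ) * δ := by field_simp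
    _ < ((⌊x/δ + 1/2⌋ : ℝ) + 1/2) * δ := by nlinarith


-- Ico ⊆ ball ∪ {endpoint}
lemma DqAux.pos_ball_of_Ico (ρ : Measure ℝ) {δ : ℝ} (hδ : 0 < δ) (j : ℤ)
    (ha : ρ {(((j:ℝ) - 1/2) * δ)} = 0)
    (h : ρ (Set.Ico (((j:ℝ) - 1/2) * δ) (((j:ℝ) + 1/2) * δ)) ≠ 0) :
    0 < ρ (Metric.ball ((j:ℝ) * δ) (δ/2)) := by
  have hsub : Set.Ico (((j:ℝ) - 1/2) * δ) (((j:ℝ) + 1/2) * δ) ⊆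
      Metric.ball ((j:ℝ) * δ) (δ/2) ∪ {(((j:ℝ) - 1/2) * δ)} := by
    intro x hx
    rcases eq_or_lt_of_le hx.1 with he | hl
    · exact Or.inr (by simp [← he])
    · refine Or.inl ?_
      have h2 := hx.2
      rw [Metric.mem_ball, Real.dist_eq, abs_lt]
      constructor <;> nlinarith
  by_contra hb
  apply h
  have hb : ρ (Metric.ball ((j:ℝ) * δ) (δ/2)) = 0 := by simpa [pos_iff_ne_zero] using hb
  refine measure_mono_null hsub ?_
  exact le_antisymm ((measure_union_le _ _).trans (by rw [hb, ha]; simp)) zero_le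

-- membership in ball x∈Ico ⟹ |x - jδ| ≤ δ/2
lemma DqAux.abs_le_of_Ico {δ : ℝ} (hδ : 0 < δ) {j : ℤ} {x : ℝ}
    (hx : x ∈ Set.Ico (((j:ℝ) - 1/2) * δ) (((j:ℝ) + 1/2) * δ)) :
    |x - (j:ℝ) * δ| ≤ δ/2 := by
  rw [abs_le]
  obtain ⟨h1, h2⟩ := hx
  constructor <;> nlinarith

lemma DqAux.mconv_apply (μ ν : Measure ℝ) [SFinite μ] [SFinite ν] {s : Set ℝ}
    (hs : MeasurableSet s) :
    mconv μ ν s = μ.prod ν ((fun p : ℝ × ℝ => p.1 + p.2) ⁻¹' s) :=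
  Measure.map_apply measurable_add hs

lemma DqAux.mconv_finite (μ ν : Measure ℝ) [IsFiniteMeasure μ] [IsFiniteMeasure ν] :
    IsFiniteMeasure (mconv μ ν) := by
  constructor
  rw [DqAux.mconv_apply μ ν MeasurableSet.univ]
  simp only [Set.preimage_univ]
  exact measure_lt_top _ _

lemma DqAux.mconv_ne_zero (μ ν : Measure ℝ) [IsFiniteMeasure μ] [IsFiniteMeasure ν]
    (hμ0 : μ ≠ 0) (hν0 : ν ≠ 0) : mconv μ ν ≠ 0 := by
  have h : mconv μ ν Set.univ ≠ 0 := by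
    rw [DqAux.mconv_apply μ ν MeasurableSet.univ]
    simp only [Set.preimage_univ, ← Set.univ_prod_univ, Measure.prod_prod]
    exact mul_ne_zero (Measure.measure_univ_ne_zero.2 hμ0) (
      Measure.measure_univ_ne_zero.2 hν0)
  intro hc
  exact h (by simp [hc])

-- support bound for the convolution
lemma DqAux.mconv_compl_ball (μ ν : Measure ℝ) [IsFiniteMeasure μ] [IsFiniteMeasure ν]
    {Rμ Rν : ℝ} (hRμ : μ (Metric.ball (0:ℝ) Rμ)ᶜ = 0) (hRν : ν (Metric.ball (0:ℝ) Rν)ᶜ = 0) :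
    mconv μ ν (Metric.ball (0:ℝ) (Rμ + Rν))ᶜ = 0 := by
  rw [DqAux.mconv_apply μ ν Metric.isOpen_ball.measurableSet.compl]
  have hsub : (fun p : ℝ × ℝ => p.1 + p.2) ⁻¹' (Metric.ball (0:ℝ) (Rμ + Rν))ᶜ ⊆
      ((Metric.ball (0:ℝ) Rμ)ᶜ ×ˢ Set.univ) ∪ (Set.univ ×ˢ (Metric.ball (0:ℝ) Rν)ᶜ) := by
    intro p hp
    by_contra hcon
    simp only [Set.mem_union, Set.mem_prod, Set.mem_univ, and_true, true_and,
      Set.mem_compl_iff, not_or, not_not] at hcon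
    obtain ⟨h1, h2⟩ := hcon
    apply hp
    simp only [Set.mem_compl_iff, not_not, Metric.mem_ball, Real.dist_eq, sub_zero] at *
    calc |p.1 + p.2| ≤ |p.1| + |p.2| := abs_add_le _ _
    _ < Rμ + Rν := by
        simpa [Real.dist_eq] using add_lt_add h1 h2
  refine measure_mono_null hsub ?_
  refine le_antisymm ((measure_union_le _ _).trans ?_) zero_le
  rw [Measure.prod_prod, Measure.prod_prod, hRμ, hRν]
  simp

open scoped Classical in
noncomputable def DqAux.S (ρ : Measure ℝ) (q κ ε : ℝ) : ℝ :=
  ∑' i : ℤ, (if 0 < ρ (Metric.ball ((i : ℝ) * ε) (ε/2)) then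
    ((ρ (Metric.ball ((i : ℝ) * ε) ((1/2 + κ) * ε))).toReal) ^ q else 0)

namespace DqAux

lemma index_bound (ρ : Measure ℝ) {R ε : ℝ} (hε : 0 < ε)
    (hRs : ρ (Metric.ball (0:ℝ) R)ᶜ = 0) {i : ℤ}
    (h : 0 < ρ (Metric.ball ((i:ℝ) * ε) (ε/2))) : |i| ≤ (⌈R/ε⌉₊ : ℤ) := by
  have hne : ¬ (|(i:ℝ)| * ε ≥ R + ε/2) := by
    intro hge
    have hsub : Metric.ball ((i:ℝ) * ε) (ε/2) ⊆ (Metric.ball (0:ℝ) R)ᶜ := by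
      intro z hz
      simp only [Metric.mem_ball, Real.dist_eq, sub_zero, Set.mem_compl_iff, not_lt]
      rw [Metric.mem_ball, Real.dist_eq] at hz
      have h1 : |(i:ℝ)| * ε - |z| ≤ |z - (i:ℝ)*ε| := by
        have h0 := abs_sub_abs_le_abs_sub ((i:ℝ)*ε) z
        calc |(i:ℝ)| * ε - |z| = |(i:ℝ)*ε| - |z| := by rw [abs_mul, abs_of_pos hε]
        _ ≤ |(i:ℝ)*ε - z| := h0
        _ = |z - (i:ℝ)*ε| := abs_sub_comm _ _
      linarith
    have := measure_mono_null hsub hRs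
    simp [this] at h
  push_neg at hne
  have hR : (|i| : ℝ) < R/ε + 1/2 := by
    have h2 : (|i| : ℝ) * ε < R + ε/2 := by push_cast; exact hne
    rw [← lt_div_iff₀ hε] at h2
    calc (|i| : ℝ) < (R + ε/2)/ε := h2
    _ = R/ε + 1/2 := by rw [add_div]; congr 1; rw [div_div]; rw [div_eq_iff (by positivity)]; ring
  have h2 : (|i| : ℝ) < (⌈R/ε⌉₊ : ℝ) + 1 := by
    have := Nat.le_ceil (R/ε)
    linarith
  exact_mod_cast Int.lt_add_one_iff.1 (by exact_mod_cast h2)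

open scoped Classical in
lemma S_eq_sum (ρ : Measure ℝ) (q κ : ℝ) {R ε : ℝ} (hε : 0 < ε)
    (hRs : ρ (Metric.ball (0:ℝ) R)ᶜ = 0) :
    S ρ q κ ε = ∑ i ∈ (Finset.Icc (-(⌈R/ε⌉₊:ℤ)) (⌈R/ε⌉₊:ℤ)).filter
        (fun i : ℤ => 0 < ρ (Metric.ball ((i : ℝ) * ε) (ε/2))),
      ((ρ (Metric.ball ((i : ℝ) * ε) ((1/2 + κ) * ε))).toReal) ^ q := by
  rw [S, tsum_eq_sum (s := Finset.Icc (-(⌈R/ε⌉₊:ℤ)) (⌈R/ε⌉₊:ℤ)) ?_, Finset.sum_filter]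
  intro i hi
  rw [if_neg]
  intro hpos
  exact hi (Finset.mem_Icc.2 (abs_le.1 (index_bound ρ hε hRs hpos)))

open scoped Classical in
lemma S_pos (ρ : Measure ℝ) [IsFiniteMeasure ρ] {q κ : ℝ} (hκ : 0 ≤ κ) {R ε : ℝ} (hε : 0 < ε)
    (hRs : ρ (Metric.ball (0:ℝ) R)ᶜ = 0)
    {j : ℤ} (hj : 0 < ρ (Metric.ball ((j:ℝ) * ε) (ε/2))) : 0 < S ρ q κ ε := by
  rw [S_eq_sum ρ q κ hε hRs]
  have hjmem : j ∈ (Finset.Icc (-(⌈R/ε⌉₊:ℤ)) (⌈R/ε⌉₊:ℤ)).filter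
      (fun i : ℤ => 0 < ρ (Metric.ball ((i : ℝ) * ε) (ε/2))) := by
    exact Finset.mem_filter.2 ⟨Finset.mem_Icc.2 (abs_le.1 (index_bound ρ hε hRs hj)), hj⟩
  have hterm : 0 < ((ρ (Metric.ball ((j : ℝ) * ε) ((1/2 + κ) * ε))).toReal) ^ q := by
    apply Real.rpow_pos_of_pos
    apply ENNReal.toReal_pos _ (measure_ne_top ρ _)
    refine (lt_of_lt_of_le hj (measure_mono (Metric.ball_subset_ball ?_))).ne'
    nlinarith
  calc (0:ℝ) < _ := hterm
  _ ≤ _ := Finset.single_le_sum (f := fun i : ℤ =>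
      ((ρ (Metric.ball ((i : ℝ) * ε) ((1/2 + κ) * ε))).toReal) ^ q)
      (fun i _ => Real.rpow_nonneg ENNReal.toReal_nonneg q) hjmem


lemma claim (μ ν : Measure ℝ) [IsFiniteMeasure μ] [IsFiniteMeasure ν]
    {q : ℝ} (hq : q < 0) {ε : ℝ} (hε : 0 < ε)
    (hμa : ∀ j : ℤ, μ {(((j:ℝ) - 1/2) * (ε/2))} = 0)
    (hνa : ∀ j : ℤ, ν {(((j:ℝ) - 1/2) * (ε/2))} = 0)
    (i : ℤ) :
    ∃ j k : ℤ, 0 < mconv μ ν (Metric.ball ((i:ℝ) * ε) (ε/2)) →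
      (0 < μ (Metric.ball ((j:ℝ) * (ε/2)) ((ε/2)/2)) ∧
       0 < ν (Metric.ball ((k:ℝ) * (ε/2)) ((ε/2)/2)) ∧
       |j + k - 2*i| ≤ 1 ∧
       ((mconv μ ν (Metric.ball ((i:ℝ) * ε) ((1/2 + 1) * ε))).toReal) ^ q ≤
         ((μ (Metric.ball ((j:ℝ) * (ε/2)) ((1/2 + 1/2) * (ε/2)))).toReal) ^ q *
         ((ν (Metric.ball ((k:ℝ) * (ε/2)) ((1/2 + 1/2) * (ε/2)))).toReal) ^ q) := by
  set δ := ε/2 with hδdef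
  have hδ : 0 < δ := by positivity
  by_cases hpos : 0 < mconv μ ν (Metric.ball ((i:ℝ) * ε) (ε/2))
  swap
  · exact ⟨0, 0, fun h => absurd h hpos⟩
  -- work with the product measure
  have hmb : MeasurableSet (Metric.ball ((i:ℝ) * ε) (ε/2)) := Metric.isOpen_ball.measurableSet
  rw [mconv_apply μ ν hmb] at hpos
  set A := (fun p : ℝ × ℝ => p.1 + p.2) ⁻¹' Metric.ball ((i:ℝ) * ε) (ε/2) with hA
  obtain ⟨⟨j, k⟩, hjk⟩ := exists_pos_of_cover (μ.prod ν)
    (fun p : ℤ × ℤ => (Set.Ico (((p.1:ℝ) - 1/2) * δ) (((p.1:ℝ) + 1/2) * δ)) ×ˢ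
      (Set.Ico (((p.2:ℝ) - 1/2) * δ) (((p.2:ℝ) + 1/2) * δ)))
    (fun x => by
      obtain ⟨j, hj⟩ := cover δ hδ x.1
      obtain ⟨k, hk⟩ := cover δ hδ x.2
      exact ⟨(j, k), hj, hk⟩) hpos.ne'
  refine ⟨j, k, fun _ => ?_⟩
  set Ij := Set.Ico (((j:ℝ) - 1/2) * δ) (((j:ℝ) + 1/2) * δ) with hIj
  set Ik := Set.Ico (((k:ℝ) - 1/2) * δ) (((k:ℝ) + 1/2) * δ) with hIk
  have hprodle : μ.prod ν (A ∩ Ij ×ˢ Ik) ≤ μ Ij * ν Ik := by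
    refine le_trans (measure_mono Set.inter_subset_right) ?_
    rw [Measure.prod_prod]
  have hμIj : μ Ij ≠ 0 := by
    intro h0
    exact hjk (le_antisymm (hprodle.trans (by rw [h0, zero_mul])) zero_le)
  have hνIk : ν Ik ≠ 0 := by
    intro h0
    exact hjk (le_antisymm (hprodle.trans (by rw [h0, mul_zero])) zero_le)
  have hμball : 0 < μ (Metric.ball ((j:ℝ) * δ) (δ/2)) := pos_ball_of_Ico μ hδ j (hμa j) hμIj
  have hνball : 0 < ν (Metric.ball ((k:ℝ) * δ) (δ/2)) := pos_ball_of_Ico ν hδ k (hνa k) hνIk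
  obtain ⟨⟨x, y⟩, hxyA, hxIj, hyIk⟩ := nonempty_of_measure_ne_zero hjk
  have hxj : |x - (j:ℝ) * δ| ≤ δ/2 := abs_le_of_Ico hδ hxIj
  have hyk : |y - (k:ℝ) * δ| ≤ δ/2 := abs_le_of_Ico hδ hyIk
  have hxy : |x + y - (i:ℝ) * ε| < ε/2 := by
    simpa [A, Metric.mem_ball, Real.dist_eq] using hxyA
  have hd : |j + k - 2*i| ≤ 1 := by
    have hreal : |(j:ℝ) + k - 2*i| * δ < 2 * δ := by
      have htri : |((j:ℝ) + k - 2*i) * δ| ≤ |(j:ℝ)*δ - x| + |(k:ℝ)*δ - y| + |x + y - (i:ℝ)*ε| := by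
        have heq : ((j:ℝ) + k - 2*i) * δ = ((j:ℝ)*δ - x) + ((k:ℝ)*δ - y) + (x + y - (i:ℝ)*ε) := by
          rw [hδdef]; ring
        rw [heq]
        exact (abs_add_le _ _).trans (add_le_add_left (abs_add_le _ _) _)
      rw [abs_mul, abs_of_pos hδ] at htri
      rw [abs_sub_comm] at hxj hyk
      have : ε/2 = δ := rfl
      linarith [htri, hxj, hyk, hxy]
    have : |(j:ℝ) + k - 2*i| < 2 := by
      have := lt_of_mul_lt_mul_right hreal hδ.le
      exact this
    have hcast : |((j + k - 2*i : ℤ) : ℝ)| < 2 := by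
      rw [show ((j + k - 2*i : ℤ) : ℝ) = (j:ℝ) + k - 2*i by push_cast; ring]
      exact this
    have : |j + k - 2*i| < 2 := by exact_mod_cast hcast
    omega
  refine ⟨hμball, hνball, hd, ?_⟩
  -- Minkowski-type lower bound for the convolution on the enlarged ball
  have hmink : μ (Metric.ball ((j:ℝ) * δ) δ) * ν (Metric.ball ((k:ℝ) * δ) δ) ≤
      mconv μ ν (Metric.ball ((i:ℝ) * ε) ((1/2 + 1) * ε)) := by
    rw [mconv_apply μ ν Metric.isOpen_ball.measurableSet, ← Measure.prod_prod]
    refine measure_mono ?_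
    rintro ⟨x', y'⟩ ⟨hx', hy'⟩
    simp only [Metric.mem_ball, Real.dist_eq, Set.mem_preimage] at hx' hy' ⊢
    have hdr : |((j:ℝ) + k - 2*i) * δ| ≤ δ := by
      rw [abs_mul, abs_of_pos hδ]
      have h2 : |(j:ℝ) + k - 2*i| ≤ 1 := by
        rw [show (j:ℝ) + k - 2*i = ((j + k - 2*i : ℤ) : ℝ) by push_cast; ring]
        exact_mod_cast hd
      nlinarith
    have : |x' + y' - (i:ℝ)*ε| ≤ |x' - (j:ℝ)*δ| + |y' - (k:ℝ)*δ| + |((j:ℝ) + k - 2*i) * δ| := by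
      have heq : x' + y' - (i:ℝ)*ε = (x' - (j:ℝ)*δ) + (y' - (k:ℝ)*δ) + ((j:ℝ) + k - 2*i) * δ := by
        rw [hδdef]; ring
      rw [heq]
      exact (abs_add_le _ _).trans (add_le_add_left (abs_add_le _ _) _)
    have hlt : |x' + y' - (i:ℝ)*ε| < 3 * δ := by linarith
    have : (1/2 + 1) * ε = 3 * δ := by rw [hδdef]; ring
    rw [this]
    exact hlt
  -- pass to reals and rpow
  haveI := mconv_finite μ ν
  have hμbig : 0 < (μ (Metric.ball ((j:ℝ) * δ) δ)).toReal :=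
    ENNReal.toReal_pos (lt_of_lt_of_le hμball (measure_mono
      (Metric.ball_subset_ball (by linarith)))).ne' (measure_ne_top μ _)
  have hνbig : 0 < (ν (Metric.ball ((k:ℝ) * δ) δ)).toReal :=
    ENNReal.toReal_pos (lt_of_lt_of_le hνball (measure_mono
      (Metric.ball_subset_ball (by linarith)))).ne' (measure_ne_top ν _)
  have hL : (μ (Metric.ball ((j:ℝ) * δ) δ)).toReal * (ν (Metric.ball ((k:ℝ) * δ) δ)).toReal ≤
      (mconv μ ν (Metric.ball ((i:ℝ) * ε) ((1/2 + 1) * ε))).toReal := by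
    rw [← ENNReal.toReal_mul]
    exact ENNReal.toReal_mono (measure_ne_top _ _) hmink
  have hrpow := Real.rpow_le_rpow_of_nonpos (by positivity) hL hq.le
  have hsplit : ((μ (Metric.ball ((j:ℝ) * δ) δ)).toReal *
      (ν (Metric.ball ((k:ℝ) * δ) δ)).toReal) ^ q =
      ((μ (Metric.ball ((j:ℝ) * δ) δ)).toReal) ^ q *
      ((ν (Metric.ball ((k:ℝ) * δ) δ)).toReal) ^ q :=
    Real.mul_rpow hμbig.le hνbig.le
  have hδeq : (1/2 + 1/2) * δ = δ := by ring
  rw [hδeq]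
  calc ((mconv μ ν (Metric.ball ((i:ℝ) * ε) ((1/2 + 1) * ε))).toReal) ^ q ≤ _ := hrpow
  _ = _ := hsplit

open scoped Classical in
lemma key (μ ν : Measure ℝ) [IsFiniteMeasure μ] [IsFiniteMeasure ν]
    (hμ0 : μ ≠ 0) (hν0 : ν ≠ 0)
    {Rμ Rν : ℝ} (hRμpos : 0 < Rμ) (hRνpos : 0 < Rν)
    (hRμ : μ (Metric.ball (0:ℝ) Rμ)ᶜ = 0) (hRν : ν (Metric.ball (0:ℝ) Rν)ᶜ = 0)
    {q : ℝ} (hq : q < 0) {ε : ℝ} (hε : 0 < ε)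
    (hμa : ∀ j : ℤ, μ {(((j:ℝ) - 1/2) * (ε/2))} = 0)
    (hνa : ∀ j : ℤ, ν {(((j:ℝ) - 1/2) * (ε/2))} = 0)
    (hca : ∀ i : ℤ, mconv μ ν {(((i:ℝ) - 1/2) * ε)} = 0) :
    0 < S μ q (1/2) (ε/2) ∧ 0 < S ν q (1/2) (ε/2) ∧ 0 < S (mconv μ ν) q 1 ε ∧
      S (mconv μ ν) q 1 ε ≤ 3 * (S μ q (1/2) (ε/2) * S ν q (1/2) (ε/2)) := by
  haveI := mconv_finite μ ν
  have hδ : 0 < ε/2 := by positivity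
  -- positivity of the factor sums
  have hμexists : ∃ j : ℤ, 0 < μ (Metric.ball ((j:ℝ) * (ε/2)) ((ε/2)/2)) := by
    obtain ⟨j, hj⟩ := exists_pos_of_cover μ
      (fun j : ℤ => Set.Ico (((j:ℝ) - 1/2) * (ε/2)) (((j:ℝ) + 1/2) * (ε/2)))
      (fun x => cover (ε/2) hδ x) (A := Set.univ) (Measure.measure_univ_ne_zero.2 hμ0)
    rw [Set.univ_inter] at hj
    exact ⟨j, pos_ball_of_Ico μ hδ j (hμa j) hj⟩
  have hνexists : ∃ k : ℤ, 0 < ν (Metric.ball ((k:ℝ) * (ε/2)) ((ε/2)/2)) := by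
    obtain ⟨k, hk⟩ := exists_pos_of_cover ν
      (fun j : ℤ => Set.Ico (((j:ℝ) - 1/2) * (ε/2)) (((j:ℝ) + 1/2) * (ε/2)))
      (fun x => cover (ε/2) hδ x) (A := Set.univ) (Measure.measure_univ_ne_zero.2 hν0)
    rw [Set.univ_inter] at hk
    exact ⟨k, pos_ball_of_Ico ν hδ k (hνa k) hk⟩
  have hcexists : ∃ i : ℤ, 0 < mconv μ ν (Metric.ball ((i:ℝ) * ε) (ε/2)) := by
    obtain ⟨i, hi⟩ := exists_pos_of_cover (mconv μ ν)
      (fun i : ℤ => Set.Ico (((i:ℝ) - 1/2) * ε) (((i:ℝ) + 1/2) * ε))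
      (fun x => cover ε hε x) (A := Set.univ)
      (Measure.measure_univ_ne_zero.2 (mconv_ne_zero μ ν hμ0 hν0))
    rw [Set.univ_inter] at hi
    exact ⟨i, pos_ball_of_Ico (mconv μ ν) hε i (hca i) hi⟩
  obtain ⟨j0, hj0⟩ := hμexists
  obtain ⟨k0, hk0⟩ := hνexists
  obtain ⟨i0, hi0⟩ := hcexists
  have hSμpos : 0 < S μ q (1/2) (ε/2) := S_pos μ (by norm_num) hδ hRμ hj0
  have hSνpos : 0 < S ν q (1/2) (ε/2) := S_pos ν (by norm_num) hδ hRν hk0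
  have hRc : mconv μ ν (Metric.ball (0:ℝ) (Rμ + Rν))ᶜ = 0 := mconv_compl_ball μ ν hRμ hRν
  have hScpos : 0 < S (mconv μ ν) q 1 ε := S_pos (mconv μ ν) (by norm_num) hε hRc hi0
  refine ⟨hSμpos, hSνpos, hScpos, ?_⟩
  -- choice of decomposition indices
  choose J K hJK using claim μ ν hq hε hμa hνa
  -- finsets
  set Nμ : ℤ := (⌈Rμ/(ε/2)⌉₊ : ℤ) with hNμ
  set Nν : ℤ := (⌈Rν/(ε/2)⌉₊ : ℤ) with hNν
  set Nc : ℤ := (⌈(Rμ + Rν)/ε⌉₊ : ℤ) with hNc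
  set tμ := (Finset.Icc (-Nμ) Nμ).filter
    (fun j : ℤ => 0 < μ (Metric.ball ((j:ℝ) * (ε/2)) ((ε/2)/2))) with htμ
  set tν := (Finset.Icc (-Nν) Nν).filter
    (fun k : ℤ => 0 < ν (Metric.ball ((k:ℝ) * (ε/2)) ((ε/2)/2))) with htν
  set tc := (Finset.Icc (-Nc) Nc).filter
    (fun i : ℤ => 0 < mconv μ ν (Metric.ball ((i:ℝ) * ε) (ε/2))) with htc
  have hSceq : S (mconv μ ν) q 1 ε = ∑ i ∈ tc,
      ((mconv μ ν (Metric.ball ((i:ℝ) * ε) ((1/2 + 1) * ε))).toReal) ^ q := by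
    rw [S_eq_sum (mconv μ ν) q 1 hε hRc]
  have hSμeq : S μ q (1/2) (ε/2) = ∑ j ∈ tμ,
      ((μ (Metric.ball ((j:ℝ) * (ε/2)) ((1/2 + 1/2) * (ε/2)))).toReal) ^ q := by
    rw [S_eq_sum μ q (1/2) hδ hRμ]
  have hSνeq : S ν q (1/2) (ε/2) = ∑ k ∈ tν,
      ((ν (Metric.ball ((k:ℝ) * (ε/2)) ((1/2 + 1/2) * (ε/2)))).toReal) ^ q := by
    rw [S_eq_sum ν q (1/2) hδ hRν]
  set G : (ℤ × ℤ) × ℤ → ℝ := fun p =>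
    ((μ (Metric.ball ((p.1.1:ℝ) * (ε/2)) ((1/2 + 1/2) * (ε/2)))).toReal) ^ q *
    ((ν (Metric.ball ((p.1.2:ℝ) * (ε/2)) ((1/2 + 1/2) * (ε/2)))).toReal) ^ q with hG
  set Ψ : ℤ → (ℤ × ℤ) × ℤ := fun i => ((J i, K i), J i + K i - 2*i) with hΨ
  have hstep1 : S (mconv μ ν) q 1 ε ≤ ∑ i ∈ tc, G (Ψ i) := by
    rw [hSceq]
    refine Finset.sum_le_sum fun i hi => ?_
    have hcond := (Finset.mem_filter.1 hi).2
    exact ((hJK i) hcond).2.2.2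
  have hinj : Set.InjOn Ψ tc := by
    intro i _ i' _ h
    simp only [hΨ, Prod.mk.injEq] at h
    omega
  have hstep2 : ∑ i ∈ tc, G (Ψ i) = ∑ x ∈ tc.image Ψ, G x :=
    (Finset.sum_image (fun i hi i' hi' h => hinj hi hi' h)).symm
  have hsubset : tc.image Ψ ⊆ (tμ ×ˢ tν) ×ˢ ({-1, 0, 1} : Finset ℤ) := by
    intro x hx
    obtain ⟨i, hi, rfl⟩ := Finset.mem_image.1 hx
    have hcond := (Finset.mem_filter.1 hi).2
    obtain ⟨hμb, hνb, hd, _⟩ := (hJK i) hcond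
    refine Finset.mem_product.2 ⟨Finset.mem_product.2 ⟨?_, ?_⟩, ?_⟩
    · exact Finset.mem_filter.2 ⟨Finset.mem_Icc.2 (abs_le.1 (index_bound μ hδ hRμ hμb)), hμb⟩
    · exact Finset.mem_filter.2 ⟨Finset.mem_Icc.2 (abs_le.1 (index_bound ν hδ hRν hνb)), hνb⟩
    · simp only [Finset.mem_insert, Finset.mem_singleton, hΨ]
      have := abs_le.1 hd
      omega
  have hstep3 : ∑ x ∈ tc.image Ψ, G x ≤ ∑ x ∈ (tμ ×ˢ tν) ×ˢ ({-1, 0, 1} : Finset ℤ), G x := by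
    refine Finset.sum_le_sum_of_subset_of_nonneg hsubset fun x _ _ => ?_
    exact mul_nonneg (Real.rpow_nonneg ENNReal.toReal_nonneg q)
      (Real.rpow_nonneg ENNReal.toReal_nonneg q)
  have hstep4 : ∑ x ∈ (tμ ×ˢ tν) ×ˢ ({-1, 0, 1} : Finset ℤ), G x =
      3 * (S μ q (1/2) (ε/2) * S ν q (1/2) (ε/2)) := by
    rw [Finset.sum_product]
    have hcard : ∀ p ∈ tμ ×ˢ tν, ∑ _d ∈ ({-1, 0, 1} : Finset ℤ), G (p, _d) = 3 * G (p, 0) := by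
      intro p _
      simp only [hG]
      rw [Finset.sum_const]
      norm_num
    rw [Finset.sum_congr rfl hcard, ← Finset.mul_sum]
    congr 1
    rw [hSμeq, hSνeq, Finset.sum_mul_sum, Finset.sum_product]
  calc S (mconv μ ν) q 1 ε ≤ _ := hstep1
  _ = _ := hstep2
  _ ≤ _ := hstep3
  _ = _ := hstep4


lemma not_countable_Ioo {a b : ℝ} (h : a < b) : ¬ (Set.Ioo a b).Countable := by
  intro hc
  have h1 : Cardinal.mk (Set.Ioo a b) ≤ Cardinal.aleph0 :=
    Cardinal.le_aleph0_iff_set_countable.2 hc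
  rw [Cardinal.mk_Ioo_real h] at h1
  exact Cardinal.aleph0_lt_continuum.not_ge h1

lemma half_ne (j : ℤ) : (j : ℝ) - 1/2 ≠ 0 := by
  intro h
  have h2 : (2 * j : ℝ) = 1 := by linarith
  have h3 : (2 * j : ℤ) = 1 := by exact_mod_cast h2
  omega

end DqAux


open scoped Classical in
/-- Theorem 1, case q < 0, in the improved multifractal formalism with enlarged
boxes: the generalized box dimension of the convolution is bounded from above by the
sum of the generalized box dimensions of the factors. -/
theorem Dq_convolution_le_of_neg
    (μ ν : Measure ℝ) [IsFiniteMeasure μ] [IsFiniteMeasure ν]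
    (hμ0 : μ ≠ 0) (hν0 : ν ≠ 0)
    (hμc : IsCompact (msupp μ)) (hνc : IsCompact (msupp ν))
    (q Dμ Dν Dc : ℝ) (hq : q < 0)
    (hc : Tendsto (fun ε : ℝ =>
        (1/(q-1)) *
            Real.log (∑' i : ℤ, (if 0 < mconv μ ν (Metric.ball ((i : ℝ) * ε) (ε/2)) then
              ((mconv μ ν (Metric.ball ((i : ℝ) * ε) ((1/2 + 1) * ε))).toReal) ^ q else 0)) /
          Real.log ε) (𝓝[>] 0) (𝓝 Dc))
    (hμ : Tendsto (fun ε : ℝ =>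
        (1/(q-1)) *
            Real.log (∑' i : ℤ, (if 0 < μ (Metric.ball ((i : ℝ) * ε) (ε/2)) then
              ((μ (Metric.ball ((i : ℝ) * ε) ((1/2 + 1/2) * ε))).toReal) ^ q else 0)) /
          Real.log ε) (𝓝[>] 0) (𝓝 Dμ))
    (hν : Tendsto (fun ε : ℝ =>
        (1/(q-1)) *
            Real.log (∑' i : ℤ, (if 0 < ν (Metric.ball ((i : ℝ) * ε) (ε/2)) then
              ((ν (Metric.ball ((i : ℝ) * ε) ((1/2 + 1/2) * ε))).toReal) ^ q else 0)) /
          Real.log ε) (𝓝[>] 0) (𝓝 Dν)) :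
    Dc ≤ Dμ + Dν := by
  classical
  haveI := DqAux.mconv_finite μ ν
  -- rephrase the limits via S
  have hc' : Tendsto (fun ε : ℝ =>
      (1/(q-1)) * Real.log (DqAux.S (mconv μ ν) q 1 ε) / Real.log ε) (𝓝[>] 0) (𝓝 Dc) := hc
  have hμ' : Tendsto (fun ε : ℝ =>
      (1/(q-1)) * Real.log (DqAux.S μ q (1/2) ε) / Real.log ε) (𝓝[>] 0) (𝓝 Dμ) := hμ
  have hν' : Tendsto (fun ε : ℝ =>
      (1/(q-1)) * Real.log (DqAux.S ν q (1/2) ε) / Real.log ε) (𝓝[>] 0) (𝓝 Dν) := hν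
  -- bounded supports
  obtain ⟨rμ, hrμ⟩ := (Metric.isBounded_iff_subset_closedBall (0:ℝ)).1 hμc.isBounded
  obtain ⟨rν, hrν⟩ := (Metric.isBounded_iff_subset_closedBall (0:ℝ)).1 hνc.isBounded
  set Rμ : ℝ := max rμ 0 + 1 with hRμdef
  set Rν : ℝ := max rν 0 + 1 with hRνdef
  have hRμpos : 0 < Rμ := by positivity
  have hRνpos : 0 < Rν := by positivity
  have hRμ : μ (Metric.ball (0:ℝ) Rμ)ᶜ = 0 := by
    refine measure_mono_null ?_ (DqAux.measure_msupp_compl μ)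
    refine Set.compl_subset_compl.2 (hrμ.trans ?_)
    refine (Metric.closedBall_subset_ball ?_)
    have := le_max_left rμ (0:ℝ); linarith
  have hRν : ν (Metric.ball (0:ℝ) Rν)ᶜ = 0 := by
    refine measure_mono_null ?_ (DqAux.measure_msupp_compl ν)
    refine Set.compl_subset_compl.2 (hrν.trans ?_)
    refine (Metric.closedBall_subset_ball ?_)
    have := le_max_left rν (0:ℝ); linarith
  -- the bad set of scales
  set Aμ : Set ℝ := {x | μ {x} ≠ 0} with hAμ
  set Aν : Set ℝ := {x | ν {x} ≠ 0} with hAν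
  set Ac : Set ℝ := {x | mconv μ ν {x} ≠ 0} with hAc
  set Bad : Set ℝ := ⋃ j : ℤ,
      ((fun x : ℝ => x / ((j:ℝ) - 1/2) * 2) '' (Aμ ∪ Aν)) ∪
      ((fun x : ℝ => x / ((j:ℝ) - 1/2)) '' Ac) with hBad
  have hBadc : Bad.Countable := by
    refine Set.countable_iUnion fun j => Set.Countable.union ?_ ?_
    · exact Set.Countable.image ((DqAux.countable_atoms μ).union (DqAux.countable_atoms ν)) _
    · exact Set.Countable.image (DqAux.countable_atoms (mconv μ ν)) _
  -- goodness
  have hgoodμ : ∀ ε : ℝ, ε ∉ Bad → ∀ j : ℤ, μ {(((j:ℝ) - 1/2) * (ε/2))} = 0 := by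
    intro ε hb j
    by_contra h
    apply hb
    refine Set.mem_iUnion.2 ⟨j, Or.inl ⟨(((j:ℝ) - 1/2) * (ε/2)), Or.inl h, ?_⟩⟩
    show (((j:ℝ) - 1/2) * (ε/2)) / ((j:ℝ) - 1/2) * 2 = ε
    rw [mul_comm (((j:ℝ) - 1/2)) (ε/2), mul_div_assoc, div_self (DqAux.half_ne j), mul_one]
    ring
  have hgoodν : ∀ ε : ℝ, ε ∉ Bad → ∀ j : ℤ, ν {(((j:ℝ) - 1/2) * (ε/2))} = 0 := by
    intro ε hb j
    by_contra h
    apply hb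
    refine Set.mem_iUnion.2 ⟨j, Or.inl ⟨(((j:ℝ) - 1/2) * (ε/2)), Or.inr h, ?_⟩⟩
    show (((j:ℝ) - 1/2) * (ε/2)) / ((j:ℝ) - 1/2) * 2 = ε
    rw [mul_comm (((j:ℝ) - 1/2)) (ε/2), mul_div_assoc, div_self (DqAux.half_ne j), mul_one]
    ring
  have hgoodc : ∀ ε : ℝ, ε ∉ Bad → ∀ i : ℤ, mconv μ ν {(((i:ℝ) - 1/2) * ε)} = 0 := by
    intro ε hb i
    by_contra h
    apply hb
    refine Set.mem_iUnion.2 ⟨i, Or.inr ⟨(((i:ℝ) - 1/2) * ε), h, ?_⟩⟩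
    show (((i:ℝ) - 1/2) * ε) / ((i:ℝ) - 1/2) = ε
    rw [mul_comm (((i:ℝ) - 1/2)) ε, mul_div_assoc, div_self (DqAux.half_ne i), mul_one]
  -- choose a good sequence of scales
  have hex : ∀ n : ℕ, ∃ x : ℝ, x ∈ Set.Ioo 0 (min (1/2) (1/((n:ℝ)+1))) \ Bad := by
    intro n
    have hlt : (0:ℝ) < min (1/2) (1/((n:ℝ)+1)) := lt_min (by norm_num) (by positivity)
    by_contra h
    push_neg at h
    have hempty : Set.Ioo (0:ℝ) (min (1/2) (1/((n:ℝ)+1))) \ Bad = ∅ :=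
      Set.eq_empty_iff_forall_notMem.2 h
    rw [Set.diff_eq_empty] at hempty
    exact DqAux.not_countable_Ioo hlt (hBadc.mono hempty)
  choose e he using hex
  have hepos : ∀ n, 0 < e n := fun n => (he n).1.1
  have helt : ∀ n, e n < 1/2 := fun n => lt_of_lt_of_le (he n).1.2 (min_le_left _ _)
  have hent : ∀ n, e n ∉ Bad := fun n => (he n).2
  have he0 : Tendsto e atTop (𝓝 0) := by
    refine squeeze_zero (fun n => (hepos n).le)
      (fun n => le_trans (he n).1.2.le (min_le_right _ _)) ?_
    exact tendsto_one_div_add_atTop_nhds_zero_nat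
  have hein : Tendsto e atTop (𝓝[>] 0) :=
    tendsto_nhdsWithin_of_tendsto_nhds_of_eventually_within e he0
      (Eventually.of_forall fun n => Set.mem_Ioi.2 (hepos n))
  have hein2 : Tendsto (fun n => e n / 2) atTop (𝓝[>] 0) := by
    refine tendsto_nhdsWithin_of_tendsto_nhds_of_eventually_within _ ?_
      (Eventually.of_forall fun n => Set.mem_Ioi.2 (by have := hepos n; positivity))
    have := he0.div_const 2
    simpa using this
  -- log facts
  have hlogbot : Tendsto (fun n => Real.log (e n)) atTop atBot :=
    Real.tendsto_log_nhdsGT_zero.comp hein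
  have hloginv : Tendsto (fun n => (Real.log (e n))⁻¹) atTop (𝓝 0) := by
    have h1 : Tendsto (fun n => -Real.log (e n)) atTop atTop :=
      tendsto_neg_atBot_atTop.comp hlogbot
    have h2 := h1.inv_tendsto_atTop
    have h3 : Tendsto (fun n => -(-Real.log (e n))⁻¹) atTop (𝓝 (-0)) := h2.neg
    have h4 : (fun n => -(-Real.log (e n))⁻¹) = fun n => (Real.log (e n))⁻¹ := by
      funext n; rw [inv_neg, neg_neg]
    rw [h4, neg_zero] at h3
    exact h3
  have hq1 : q - 1 < 0 := by linarith
  -- per-n inequality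
  set Fc : ℝ → ℝ := fun ε => (1/(q-1)) * Real.log (DqAux.S (mconv μ ν) q 1 ε) / Real.log ε
  set Fμ : ℝ → ℝ := fun ε => (1/(q-1)) * Real.log (DqAux.S μ q (1/2) ε) / Real.log ε
  set Fν : ℝ → ℝ := fun ε => (1/(q-1)) * Real.log (DqAux.S ν q (1/2) ε) / Real.log ε
  set r : ℕ → ℝ := fun n => Real.log (e n / 2) / Real.log (e n) with hr
  set g : ℕ → ℝ := fun n => Fμ (e n / 2) * r n + Fν (e n / 2) * r n +
    (1/(q-1)) * Real.log 3 / Real.log (e n) with hg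
  have hpern : ∀ n, Fc (e n) ≤ g n := by
    intro n
    obtain ⟨hSμpos, hSνpos, hScpos, hSle⟩ := DqAux.key μ ν hμ0 hν0 hRμpos hRνpos hRμ hRν hq
      (hepos n) (hgoodμ (e n) (hent n)) (hgoodν (e n) (hent n)) (hgoodc (e n) (hent n))
    have hεlt1 : e n < 1 := (helt n).trans (by norm_num)
    have hlogε : Real.log (e n) < 0 := Real.log_neg (hepos n) hεlt1
    have hlogδ : Real.log (e n / 2) < 0 := Real.log_neg (by have := hepos n; positivity)
      (by have := helt n; have := hepos n; linarith)
    have hcpos : 0 < (1/(q-1)) / Real.log (e n) := by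
      apply div_pos_of_neg_of_neg _ hlogε
      exact div_neg_of_pos_of_neg one_pos (by linarith)
    have hlog : Real.log (DqAux.S (mconv μ ν) q 1 (e n)) ≤
        Real.log 3 + (Real.log (DqAux.S μ q (1/2) (e n / 2)) +
          Real.log (DqAux.S ν q (1/2) (e n / 2))) := by
      calc Real.log (DqAux.S (mconv μ ν) q 1 (e n)) ≤
          Real.log (3 * (DqAux.S μ q (1/2) (e n / 2) * DqAux.S ν q (1/2) (e n / 2))) :=
            Real.log_le_log hScpos hSle
      _ = _ := by
          rw [Real.log_mul (by norm_num) (by positivity), Real.log_mul hSμpos.ne' hSνpos.ne']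
    have hFceq : Fc (e n) = ((1/(q-1)) / Real.log (e n)) *
        Real.log (DqAux.S (mconv μ ν) q 1 (e n)) := by
      simp only [Fc]; ring
    have hkey : Fc (e n) ≤ ((1/(q-1)) / Real.log (e n)) *
        (Real.log 3 + (Real.log (DqAux.S μ q (1/2) (e n / 2)) +
          Real.log (DqAux.S ν q (1/2) (e n / 2)))) := by
      rw [hFceq]
      exact mul_le_mul_of_nonneg_left hlog hcpos.le
    refine hkey.trans_eq ?_
    have h1 : Real.log (e n) ≠ 0 := hlogε.ne
    have h2 : Real.log (e n / 2) ≠ 0 := hlogδ.ne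
    have h3 : q - 1 ≠ 0 := hq1.ne
    simp only [hg, Fμ, Fν, hr]
    field_simp
    ring
  -- limit of g
  have hrlim : Tendsto r atTop (𝓝 1) := by
    have hre : ∀ n, r n = 1 - Real.log 2 * (Real.log (e n))⁻¹ := by
      intro n
      have hlogε : Real.log (e n) ≠ 0 :=
        (Real.log_neg (hepos n) ((helt n).trans (by norm_num))).ne
      simp only [hr]
      rw [Real.log_div (hepos n).ne' (by norm_num)]
      field_simp
    simp only [funext hre]
    have h2 : Tendsto (fun n => Real.log 2 * (Real.log (e n))⁻¹) atTop (𝓝 0) := by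
      have := hloginv.const_mul (Real.log 2)
      simpa using this
    have h3 := (tendsto_const_nhds (x := (1:ℝ)) (f := atTop)).sub h2
    simpa using h3
  have hFμlim : Tendsto (fun n => Fμ (e n / 2)) atTop (𝓝 Dμ) := hμ'.comp hein2
  have hFνlim : Tendsto (fun n => Fν (e n / 2)) atTop (𝓝 Dν) := hν'.comp hein2
  have hlastlim : Tendsto (fun n => (1/(q-1)) * Real.log 3 / Real.log (e n)) atTop (𝓝 0) := by
    have h1 := hloginv.const_mul ((1/(q-1)) * Real.log 3)
    simp only [mul_zero] at h1
    refine h1.congr fun n => ?_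
    rw [div_eq_mul_inv]
    ring
  have hglim : Tendsto g atTop (𝓝 (Dμ * 1 + Dν * 1 + 0)) :=
    ((hFμlim.mul hrlim).add (hFνlim.mul hrlim)).add hlastlim
  have hFclim : Tendsto (fun n => Fc (e n)) atTop (𝓝 Dc) := hc'.comp hein
  have := le_of_tendsto_of_tendsto' hFclim hglim hpern
  linarith
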